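/- Any partition of the form (a, a, b, b, ..., z, z) in which every part appears an even number of consecutive times (i.e., λ_{2j-1} = λ_{2j} for all j, with an even number of rows) is a P-position of RIT under normal play. -/

import Mathlib

/-- The `j`-th part (0-indexed) of a partition given as a list, `0` beyond the end. -/
def part (l : List ℕ) (j : ℕ) : ℕ := l.getD j 0

/-- A partition: a nonincreasing list of positive integers. -/
def IsPartition (l : List ℕ) : Prop :=
  l.Chain' (· ≥ ·) ∧ ∀ x ∈ l, 0 < x

/-- RIT move: replace the part at (0-indexed) position `i` by a smaller value `v`,
keeping the sequence nonincreasing, then drop the (trailing) zeros. -/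
def RitMove (l l' : List ℕ) : Prop :=
  ∃ i v, i < l.length ∧ v < part l i ∧ (l.set i v).Chain' (· ≥ ·) ∧
    l' = (l.set i v).filter (fun x => x ≠ 0)

/-- RIT move on an odd-numbered row (1-indexed), i.e. an even 0-indexed position. -/
def RitMoveOdd (l l' : List ℕ) : Prop :=
  ∃ i v, i < l.length ∧ i % 2 = 0 ∧ v < part l i ∧ (l.set i v).Chain' (· ≥ ·) ∧
    l' = (l.set i v).filter (fun x => x ≠ 0)

/-- RIT move on an even-numbered row (1-indexed), i.e. an odd 0-indexed position. -/
def RitMoveEven (l l' : List ℕ) : Prop :=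
  ∃ i v, i < l.length ∧ i % 2 = 1 ∧ v < part l i ∧ (l.set i v).Chain' (· ≥ ·) ∧
    l' = (l.set i v).filter (fun x => x ≠ 0)

/-- `core λ = (λ₂, λ₂, λ₄, λ₄, …)` (1-indexed parts), as a `0`-padded sequence. -/
def core (l : List ℕ) : ℕ → ℕ := fun j => part l (2 * (j / 2) + 1)

/-- `rem λ = (λ₁ - λ₂, λ₃ - λ₄, …)` (1-indexed parts), as a `0`-padded sequence. -/
def rem (l : List ℕ) : ℕ → ℕ := fun i => part l (2 * i) - part l (2 * i + 1)

/-- A Nim move strictly decreases exactly one coordinate. -/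
def NimMove (p q : ℕ → ℕ) : Prop := ∃ i, q i < p i ∧ ∀ j, j ≠ i → q j = p j

/-- The nim-sum (bitwise XOR) of the remnant of `l`:
`(λ₁ - λ₂) ⊕ (λ₃ - λ₄) ⊕ ⋯ ⊕ (λ_{2⌈r/2⌉-1} - λ_{2⌈r/2⌉})`. -/
def nimSum (l : List ℕ) : ℕ :=
  (List.ofFn (fun i : Fin ((l.length + 1) / 2) => rem l i)).foldr (· ^^^ ·) 0

/-- The minimal excludant of a set of naturals. -/
noncomputable def mexOf (S : Set ℕ) : ℕ := sInf {n | n ∉ S}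

/-- `G` is the (normal play) Sprague-Grundy function of RIT. -/
def IsRitGrundy (G : List ℕ → ℕ) : Prop :=
  ∀ l, IsPartition l → G l = mexOf {n | ∃ l', RitMove l l' ∧ G l' = n}

/-- `G` is the misère Grundy function of RIT (value `1` at the terminal position). -/
def IsRitMisereGrundy (G : List ℕ → ℕ) : Prop :=
  G [] = 1 ∧ ∀ l, IsPartition l → l ≠ [] →
    G l = mexOf {n | ∃ l', RitMove l l' ∧ G l' = n}

/-- `G` is the misère Grundy function of Nim on `0`-padded sequences of heaps. -/
def IsNimMisereGrundy (G : (ℕ → ℕ) → ℕ) : Prop :=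
  (∀ p : ℕ → ℕ, (∀ i, p i = 0) → G p = 1) ∧
  (∀ p : ℕ → ℕ, (Function.support p).Finite → (∃ i, p i ≠ 0) →
    G p = mexOf {n | ∃ q, NimMove p q ∧ G q = n})

/-- `P` is the set of P-positions of RIT under normal play. -/
def IsRitP (P : List ℕ → Prop) : Prop :=
  ∀ l, IsPartition l → (P l ↔ ∀ l', RitMove l l' → ¬ P l')

/-! In a paired partition `λ₁ = λ₂ ≥ λ₃ = λ₄ ≥ ⋯` only an even row `λ_{2j}` can be lowered,
since lowering `λ_{2j-1}` would put it below its twin. The second player answers by lowering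
`λ_{2j-1}` to the same value, which restores the pairing; every move decreases `|λ|`, so induction
on `|λ|` shows that every paired partition is a P-position. -/

open Function

lemma part_eq_getElem {l : List ℕ} {j : ℕ} (h : j < l.length) : part l j = l[j] :=
  List.getD_eq_getElem l 0 h

lemma part_eq_zero {l : List ℕ} {j : ℕ} (h : l.length ≤ j) : part l j = 0 :=
  List.getD_eq_default l 0 h

lemma lt_length_of_part_pos {l : List ℕ} {j : ℕ} (h : 0 < part l j) : j < l.length := by
  by_contra! hj
  rw [part_eq_zero hj] at h
  exact h.false

lemma part_set {l : List ℕ} {i : ℕ} (v : ℕ) (h : i < l.length) :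
    part (l.set i v) = update (part l) i v := by
  funext j
  rcases eq_or_ne j i with rfl | hj
  · rw [update_self, part_eq_getElem (by simpa using h), List.getElem_set_self]
  · rw [update_of_ne hj]
    simp [part, List.getD_eq_getElem?_getD, List.getElem?_set_ne (Ne.symm hj)]

lemma isChain_ge_iff_antitone_part {l : List ℕ} : l.IsChain (· ≥ ·) ↔ Antitone (part l) := by
  constructor
  · intro h
    refine antitone_nat_of_succ_le fun j => ?_
    by_cases hj : j + 1 < l.length
    · rw [part_eq_getElem hj, part_eq_getElem (by omega)]
      exact h.getElem j hj
    · rw [part_eq_zero (by omega)]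
      exact Nat.zero_le _
  · refine fun h => List.isChain_iff_getElem.mpr fun j hj => ?_
    rw [← part_eq_getElem hj, ← part_eq_getElem (by omega)]
    exact h (Nat.le_succ j)

lemma part_filter_ne_zero {l : List ℕ} (h : l.IsChain (· ≥ ·)) :
    part (l.filter (· ≠ 0)) = part l := by
  induction l with
  | nil => rfl
  | cons a t ih =>
    have ht := ih h.tail
    rcases Nat.eq_zero_or_pos a with rfl | ha
    · have hzero : t.filter (· ≠ 0) = [] := by
        simpa using fun x hx => List.rel_of_pairwise_cons h.pairwise hx
      rw [List.filter_cons_of_neg (by simp), hzero]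
      rw [hzero] at ht
      funext j
      cases j with
      | zero => rfl
      | succ j => exact congrFun ht j
    · rw [List.filter_cons_of_pos (by simpa using ha.ne')]
      funext j
      cases j with
      | zero => rfl
      | succ j => exact congrFun ht j

lemma List.sum_filter_ne_zero (l : List ℕ) : (l.filter (· ≠ 0)).sum = l.sum := by
  induction l with
  | nil => rfl
  | cons a t ih =>
    rw [List.filter_cons]
    split_ifs with ha
    · rw [List.sum_cons, List.sum_cons, ih]
    · rw [ih, List.sum_cons, show a = 0 by simpa using ha, zero_add]

lemma antitone_update_of_le {g : ℕ → ℕ} (hg : Antitone g) {i v : ℕ} (hle : g (i + 1) ≤ v)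
    (hge : ∀ j < i, v ≤ g j) : Antitone (update g i v) := by
  refine antitone_nat_of_succ_le fun n => ?_
  rcases lt_trichotomy (n + 1) i with h | h | h
  · rw [update_of_ne (by omega), update_of_ne (by omega)]
    exact hg (Nat.le_succ n)
  · rw [h, update_self, update_of_ne (by omega)]
    exact hge n (by omega)
  · rcases eq_or_ne n i with rfl | hn
    · rw [update_self, update_of_ne (by omega)]
      exact hle
    · rw [update_of_ne (by omega), update_of_ne hn]
      exact hg (Nat.le_succ n)

namespace RitMove

variable {l l' : List ℕ}

lemma isPartition (h : RitMove l l') : IsPartition l' := by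
  obtain ⟨i, v, -, -, hchain, rfl⟩ := h
  exact ⟨List.IsChain.sublist hchain List.filter_sublist,
    fun x hx => Nat.pos_of_ne_zero (by simpa using (List.mem_filter.mp hx).2)⟩

lemma sum_lt (h : RitMove l l') : l'.sum < l.sum := by
  obtain ⟨i, v, hi, hv, -, rfl⟩ := h
  have hsplit : l.sum = (l.take i).sum + l[i] + (l.drop (i + 1)).sum := by
    rw [← List.sum_take_add_sum_drop l i, List.drop_eq_getElem_cons hi, List.sum_cons,
      add_assoc]
  rw [part_eq_getElem hi] at hv
  rw [List.sum_filter_ne_zero, List.sum_set, if_pos hi, hsplit]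
  omega

lemma exists_update (h : RitMove l l') :
    ∃ i v, v < part l i ∧ Antitone (update (part l) i v) ∧ part l' = update (part l) i v := by
  obtain ⟨i, v, hi, hv, hchain, rfl⟩ := h
  refine ⟨i, v, hv, part_set v hi ▸ isChain_ge_iff_antitone_part.mp hchain, ?_⟩
  rw [part_filter_ne_zero hchain, part_set v hi]

end RitMove

lemma exists_ritMove_of_antitone {l : List ℕ} {i v : ℕ} (hv : v < part l i)
    (hanti : Antitone (update (part l) i v)) :
    ∃ l', RitMove l l' ∧ part l' = update (part l) i v := by
  have hi : i < l.length := lt_length_of_part_pos (by omega)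
  have hchain : (l.set i v).IsChain (· ≥ ·) :=
    isChain_ge_iff_antitone_part.mpr (by rwa [part_set v hi])
  exact ⟨_, ⟨i, v, hi, hv, hchain, rfl⟩, by rw [part_filter_ne_zero hchain, part_set v hi]⟩

section Mirror

variable {f : ℕ → ℕ} {v : ℕ}

lemma odd_of_antitone_update (hpair : ∀ j, f (2 * j) = f (2 * j + 1)) {i : ℕ} (hv : v < f i)
    (hanti : Antitone (update f i v)) : Odd i := by
  rw [Nat.odd_iff]
  by_contra hi
  have hle := hanti (Nat.le_add_right i 1)
  rw [update_self, update_of_ne (by omega)] at hle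
  have htwin := hpair (i / 2)
  rw [show 2 * (i / 2) = i by omega] at htwin
  omega

lemma antitone_update_twin (hf : Antitone f) {k : ℕ} (hv : v < f (2 * k + 1))
    (hanti : Antitone (update f (2 * k + 1) v)) :
    Antitone (update (update f (2 * k + 1) v) (2 * k) v) :=
  antitone_update_of_le hanti (by rw [update_self]) fun j hj => by
    rw [update_of_ne (by omega)]
    exact hv.le.trans (hf (by omega))

lemma paired_update_twin (hpair : ∀ j, f (2 * j) = f (2 * j + 1)) (k : ℕ) :
    ∀ j, update (update f (2 * k + 1) v) (2 * k) v (2 * j) =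
      update (update f (2 * k + 1) v) (2 * k) v (2 * j + 1) := by
  intro j
  rcases eq_or_ne j k with rfl | hj
  · rw [update_self, update_of_ne (by omega), update_self]
  · rw [update_of_ne (by omega), update_of_ne (by omega), update_of_ne (by omega),
      update_of_ne (by omega), hpair]

end Mirror

theorem IsRitP.of_paired {P : List ℕ → Prop} (hP : IsRitP P) {l : List ℕ} (hl : IsPartition l)
    (hpair : ∀ j, part l (2 * j) = part l (2 * j + 1)) : P l := by
  refine (hP l hl).mpr fun l' hmove hPl' => ?_
  obtain ⟨i, v, hv, hanti, hpart⟩ := hmove.exists_update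
  obtain ⟨k, rfl⟩ := odd_of_antitone_update hpair hv hanti
  have hv' : v < part l' (2 * k) := by
    rwa [hpart, update_of_ne (by omega), hpair]
  obtain ⟨l'', hmove', hpart'⟩ := exists_ritMove_of_antitone hv'
    (by rw [hpart]; exact antitone_update_twin (isChain_ge_iff_antitone_part.mp hl.1) hv hanti)
  have hPl'' : P l'' := hP.of_paired hmove'.isPartition
    (by rw [hpart', hpart]; exact paired_update_twin hpair k)
  exact (hP l' hmove.isPartition).mp hPl' l'' hmove' hPl''
termination_by l.sum
decreasing_by exact hmove'.sum_lt.trans hmove.sum_lt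

/-- a partition with an even number of rows in which
`λ_{2j-1} = λ_{2j}` for all `j` is a P-position of RIT under normal play. -/
theorem stmt_11 (P : List ℕ → Prop) (hP : IsRitP P) (l : List ℕ)
    (hl : IsPartition l) (heven : l.length % 2 = 0)
    (hpair : ∀ j, 2 * j + 1 < l.length → part l (2 * j) = part l (2 * j + 1)) :
    P l :=
  hP.of_paired hl fun j => by
    by_cases hj : 2 * j + 1 < l.length
    · exact hpair j hj
    · rw [part_eq_zero (by omega), part_eq_zero (by omega)]
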